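/- arXiv:1908.07179 — 2 statements merged into one kernel-verified Lean document; each statement's English description precedes it below -/
import Mathlib

section
/- Let G be a finite simple graph with connected components G₁, ..., G_m, all with vertices in ℕ. Then the independence complex Δ(G) is sortable if and only if each Δ(G_r) is sortable. -/
/-!
Both halves of the sorting of `F` and `G` lie in `F ∪ G`, so restricting a sortable labeling to
the vertices of one component keeps it sortable. Conversely, shift sorting labelings of the
components into consecutive disjoint intervals. The sorted multiset union of two faces is then
the concatenation of the sorted unions of their pieces in the successive intervals, so each half
of the sorting is a union, over the components, of one of the two halves of the sorting of the
pieces. These are faces of the components, and faces of distinct components have an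
independent union.
-/

/-- The first component of the sorting `sort(F,G)`: the elements at odd
positions (1-indexed) of the weakly increasing list of the multiset union of `F` and `G`. -/
def sortFst (F G : Finset ℕ) : Finset ℕ :=
  ((((F.val + G.val).sort (· ≤ ·)).zipIdx.filter (fun p => p.2 % 2 = 0)).map Prod.fst).toFinset

/-- The second component of the sorting `sort(F,G)`: the elements at even
positions (1-indexed). -/
def sortSnd (F G : Finset ℕ) : Finset ℕ :=
  ((((F.val + G.val).sort (· ≤ ·)).zipIdx.filter (fun p => p.2 % 2 = 1)).map Prod.fst).toFinset

def SortableWrt (Δ : Set (Finset ℕ)) : Prop :=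
  ∀ F ∈ Δ, ∀ G ∈ Δ, sortFst F G ∈ Δ ∧ sortSnd F G ∈ Δ

/-- Sortable with respect to some (injective) relabeling of the vertices. -/
def Sortable (Δ : Set (Finset ℕ)) : Prop :=
  ∃ f : ℕ → ℕ, Function.Injective f ∧ SortableWrt {F | ∃ H ∈ Δ, F = H.image f}

def IsIndep (G : SimpleGraph ℕ) (F : Finset ℕ) : Prop :=
  ∀ a ∈ F, ∀ b ∈ F, ¬ G.Adj a b

/-- The independence complex of `G` with vertex set `V`. -/
def indepComplex (G : SimpleGraph ℕ) (V : Finset ℕ) : Set (Finset ℕ) :=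
  {F | F ⊆ V ∧ IsIndep G F}

section Alternate

variable {α β : Type*}

def alternate : Bool → List α → List α
  | _, [] => []
  | true, a :: l => a :: alternate false l
  | false, _ :: l => alternate true l

theorem alternate_sublist : ∀ (b : Bool) (l : List α), (alternate b l).Sublist l
  | _, [] => .slnil
  | true, _ :: l => (alternate_sublist false l).cons_cons _
  | false, _ :: l => (alternate_sublist true l).cons _

theorem alternate_map (f : α → β) : ∀ (b : Bool) (l : List α),
    alternate b (l.map f) = (alternate b l).map f
  | _, [] => rfl
  | true, _ :: l => by simp [alternate, alternate_map f false l]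
  | false, _ :: l => by simp [alternate, alternate_map f true l]

theorem exists_alternate_append : ∀ (b : Bool) (l l' : List α),
    ∃ b', alternate b (l ++ l') = alternate b l ++ alternate b' l'
  | b, [], _ => ⟨b, by cases b <;> rfl⟩
  | true, _ :: l, l' => (exists_alternate_append false l l').imp fun _ h => by
      simp [alternate, h]
  | false, _ :: l, l' => (exists_alternate_append true l l').imp fun _ h => by
      simp [alternate, h]

theorem map_fst_filter_zipIdx_mod_two {k : ℕ} (hk : k < 2) : ∀ (l : List α) (n : ℕ),
    ((l.zipIdx n).filter (fun p => p.2 % 2 = k)).map Prod.fst = alternate (n % 2 = k) l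
  | [], _ => by simp [alternate]
  | a :: l, n => by
    have ih := map_fst_filter_zipIdx_mod_two hk l (n + 1)
    rcases Nat.mod_two_eq_zero_or_one n with h | h <;>
    · have : (n + 1) % 2 = 1 - n % 2 := by omega
      interval_cases k <;> simp_all [List.zipIdx_cons, alternate]

end Alternate

def sortPart (b : Bool) (F G : Finset ℕ) : Finset ℕ :=
  (alternate b ((F.val + G.val).sort (· ≤ ·))).toFinset

theorem sortPart_true (F G : Finset ℕ) : sortPart true F G = sortFst F G := by
  simp [sortFst, sortPart, map_fst_filter_zipIdx_mod_two (show 0 < 2 by norm_num)]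

theorem sortPart_false (F G : Finset ℕ) : sortPart false F G = sortSnd F G := by
  simp [sortSnd, sortPart, map_fst_filter_zipIdx_mod_two (show 1 < 2 by norm_num)]

theorem sortableWrt_iff {Δ : Set (Finset ℕ)} :
    SortableWrt Δ ↔ ∀ F ∈ Δ, ∀ G ∈ Δ, ∀ b, sortPart b F G ∈ Δ := by
  simp only [SortableWrt, Bool.forall_bool, sortPart_true, sortPart_false, and_comm]

theorem sortPart_subset_union (b : Bool) (F G : Finset ℕ) : sortPart b F G ⊆ F ∪ G := by
  intro a ha
  simpa using (alternate_sublist b _).subset (List.mem_toFinset.mp ha)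

theorem sortPart_image {ψ : ℕ → ℕ} (hψ : StrictMono ψ) (b : Bool) (F G : Finset ℕ) :
    sortPart b (F.image ψ) (G.image ψ) = (sortPart b F G).image ψ := by
  rw [sortPart, sortPart, Finset.image_val_of_injOn hψ.injective.injOn,
    Finset.image_val_of_injOn hψ.injective.injOn,
    ← Multiset.map_add, ← Multiset.map_sort ψ _ (· ≤ ·) (· ≤ ·) fun _ _ _ _ => hψ.le_iff_le.symm,
    alternate_map, ← List.toFinset_coe, ← Multiset.map_coe, Multiset.toFinset_map]
  rfl

theorem sort_add_of_forall_le {α : Type*} [LinearOrder α] {s t : Multiset α} (h : ∀ a ∈ s, ∀ b ∈ t, a ≤ b) :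
    (s + t).sort (· ≤ ·) = s.sort (· ≤ ·) ++ t.sort (· ≤ ·) := by
  refine List.Perm.eq_of_pairwise' (Multiset.pairwise_sort _ _) ?_ ?_
  · rw [List.pairwise_append]
    exact ⟨Multiset.pairwise_sort _ _, Multiset.pairwise_sort _ _,
      fun a ha b hb => h a (by simpa using ha) b (by simpa using hb)⟩
  · rw [← Multiset.coe_eq_coe, ← Multiset.coe_add]
    simp only [Multiset.sort_eq]

theorem exists_alternate_sort_sum : ∀ {m : ℕ} (S : Fin m → Multiset ℕ),
    (∀ r s, r < s → ∀ a ∈ S r, ∀ b ∈ S s, a ≤ b) → ∀ b : Bool,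
    ∃ c : Fin m → Bool, ∀ x, x ∈ alternate b ((∑ r, S r).sort (· ≤ ·)) ↔
      ∃ r, x ∈ alternate (c r) ((S r).sort (· ≤ ·))
  | 0, _, _, _ => ⟨Fin.elim0, by simp [alternate]⟩
  | m + 1, S, hS, b => by
    have hle : ∀ a ∈ S 0, ∀ x ∈ ∑ r : Fin m, S r.succ, a ≤ x := by
      intro a ha x hx
      obtain ⟨r, -, hx⟩ := Multiset.mem_sum.mp hx
      exact hS 0 r.succ r.succ_pos a ha x hx
    obtain ⟨b', hb'⟩ := exists_alternate_append b ((S 0).sort (· ≤ ·))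
      ((∑ r : Fin m, S r.succ).sort (· ≤ ·))
    obtain ⟨c, hc⟩ := exists_alternate_sort_sum (fun r => S r.succ)
      (fun r s hrs => hS r.succ s.succ (Fin.succ_lt_succ_iff.mpr hrs)) b'
    refine ⟨Fin.cons b c, fun x => ?_⟩
    simp [Fin.sum_univ_succ, sort_add_of_forall_le hle, hb', hc, Fin.exists_fin_succ]

section Blocks

variable {m : ℕ} {I : Fin m → Finset ℕ}

theorem pairwise_disjoint_of_lt (hI : ∀ r s, r < s → ∀ a ∈ I r, ∀ b ∈ I s, a < b) :
    Pairwise (Function.onFun Disjoint I) := by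
  intro r s hrs
  refine Finset.disjoint_left.mpr fun a har has => ?_
  rcases hrs.lt_or_gt with h | h
  · exact lt_irrefl a (hI r s h a har a has)
  · exact lt_irrefl a (hI s r h a has a har)

theorem val_eq_sum_val_inter (hI : Pairwise (Function.onFun Disjoint I)) {F : Finset ℕ}
    (hF : F ⊆ Finset.univ.biUnion I) : F.val = ∑ r, (F ∩ I r).val := by
  have hdisj : (Set.univ : Set (Fin m)).PairwiseDisjoint fun r => F ∩ I r :=
    fun r _ s _ hrs => (hI hrs).mono Finset.inter_subset_right Finset.inter_subset_right
  conv_lhs => rw [← Finset.inter_eq_left.mpr hF, Finset.inter_biUnion,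
    ← Finset.disjiUnion_eq_biUnion _ _ (by simpa using hdisj)]
  rw [Finset.disjiUnion_val, Multiset.bind, Multiset.join, Finset.sum_eq_multiset_sum]

theorem exists_sortPart_eq_biUnion (hI : ∀ r s, r < s → ∀ a ∈ I r, ∀ b ∈ I s, a < b)
    {F G : Finset ℕ} (hF : F ⊆ Finset.univ.biUnion I) (hG : G ⊆ Finset.univ.biUnion I)
    (b : Bool) : ∃ c : Fin m → Bool,
      sortPart b F G = Finset.univ.biUnion fun r => sortPart (c r) (F ∩ I r) (G ∩ I r) := by
  have hle : ∀ r s, r < s → ∀ a ∈ (F ∩ I r).val + (G ∩ I r).val,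
      ∀ x ∈ (F ∩ I s).val + (G ∩ I s).val, a ≤ x := by
    intro r s hrs a ha x hx
    simp only [Multiset.mem_add, Finset.mem_val, Finset.mem_inter] at ha hx
    exact (hI r s hrs a (by tauto) x (by tauto)).le
  obtain ⟨c, hc⟩ := exists_alternate_sort_sum _ hle b
  refine ⟨c, Finset.ext fun x => ?_⟩
  have hdisj := pairwise_disjoint_of_lt hI
  simp only [sortPart, val_eq_sum_val_inter hdisj hF, val_eq_sum_val_inter hdisj hG,
    ← Finset.sum_add_distrib, List.mem_toFinset, hc, Finset.mem_biUnion, Finset.mem_univ,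
    true_and]

end Blocks

theorem SortableWrt.restrict {Δ : Set (Finset ℕ)} (h : SortableWrt Δ) (W : Finset ℕ) :
    SortableWrt {F | F ∈ Δ ∧ F ⊆ W} := by
  rw [sortableWrt_iff] at h ⊢
  exact fun F hF G hG b => ⟨h F hF.1 G hG.1 b,
    (sortPart_subset_union b F G).trans (Finset.union_subset hF.2 hG.2)⟩

theorem SortableWrt.image {Δ : Set (Finset ℕ)} (h : SortableWrt Δ) {ψ : ℕ → ℕ}
    (hψ : StrictMono ψ) : SortableWrt (Finset.image ψ '' Δ) := by
  rw [sortableWrt_iff] at h ⊢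
  rintro _ ⟨F, hF, rfl⟩ _ ⟨G, hG, rfl⟩ b
  exact ⟨sortPart b F G, h F hF G hG b, (sortPart_image hψ b F G).symm⟩

theorem sortableWrt_of_blocks {m : ℕ} {I : Fin m → Finset ℕ}
    (hI : ∀ r s, r < s → ∀ a ∈ I r, ∀ b ∈ I s, a < b) {Δ : Set (Finset ℕ)}
    (hsub : ∀ F ∈ Δ, F ⊆ Finset.univ.biUnion I) (hdown : ∀ F ∈ Δ, ∀ F' ⊆ F, F' ∈ Δ)
    (hjoin : ∀ X : Fin m → Finset ℕ, (∀ r, X r ∈ Δ ∧ X r ⊆ I r) → Finset.univ.biUnion X ∈ Δ)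
    (hblock : ∀ r, SortableWrt {F | F ∈ Δ ∧ F ⊆ I r}) : SortableWrt Δ := by
  rw [sortableWrt_iff]
  intro F hF G hG b
  obtain ⟨c, hc⟩ := exists_sortPart_eq_biUnion hI (hsub F hF) (hsub G hG) b
  have hrestrict : ∀ (H : Finset ℕ), H ∈ Δ → ∀ r, H ∩ I r ∈ {F | F ∈ Δ ∧ F ⊆ I r} :=
    fun H hH r => ⟨hdown H hH _ Finset.inter_subset_left, Finset.inter_subset_right⟩
  rw [hc]
  exact hjoin _ fun r =>
    sortableWrt_iff.mp (hblock r) _ (hrestrict F hF r) _ (hrestrict G hG r) (c r)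

theorem sortable_iff {Δ : Set (Finset ℕ)} :
    Sortable Δ ↔ ∃ f : ℕ → ℕ, Function.Injective f ∧ SortableWrt (Finset.image f '' Δ) := by
  simp only [Sortable, Set.image, eq_comm]

theorem exists_injective_blockwise {m : ℕ} {V : Fin m → Finset ℕ}
    (hV : Pairwise (Function.onFun Disjoint V)) {g : Fin m → ℕ → ℕ}
    (hg : ∀ r, Set.InjOn (g r) (V r)) :
    ∃ (B : ℕ) (f : ℕ → ℕ), Function.Injective f ∧ (∀ r, ∀ a ∈ V r, f a = r * B + g r a) ∧
      ∀ r s, r < s → ∀ a ∈ V r, ∀ b ∈ V s, f a < f b := by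
  classical
  obtain ⟨B, hB⟩ : ∃ B, ∀ r, ∀ a ∈ V r, g r a < B :=
    ⟨Finset.univ.sup (fun r => (V r).sup (g r)) + 1, fun r a ha =>
      Nat.lt_succ_of_le ((Finset.le_sup ha).trans
        (Finset.le_sup (f := fun r => (V r).sup (g r)) (Finset.mem_univ r)))⟩
  let f : ℕ → ℕ := fun a =>
    if h : ∃ r, a ∈ V r then h.choose * B + g h.choose a else m * B + a
  have hfV : ∀ r, ∀ a ∈ V r, f a = r * B + g r a := by
    intro r a ha
    have hex : ∃ s, a ∈ V s := ⟨r, ha⟩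
    obtain rfl : hex.choose = r := by
      by_contra hne
      exact Finset.disjoint_left.mp (hV hne) hex.choose_spec ha
    simp only [f, dif_pos hex]
  have hbound : ∀ r, ∀ a ∈ V r, r * B ≤ f a ∧ f a < (r + 1) * B := by
    intro r a ha
    rw [hfV r a ha, add_mul, one_mul]
    exact ⟨Nat.le_add_right _ _, Nat.add_lt_add_left (hB r a ha) _⟩
  have hout : ∀ a, (¬ ∃ r, a ∈ V r) → m * B ≤ f a := fun a ha => by
    simp only [f, dif_neg ha, Nat.le_add_right]
  have hlt : ∀ r s, r < s → ∀ a ∈ V r, ∀ b ∈ V s, f a < f b := fun r s hrs a ha b hb =>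
    calc f a < (r + 1) * B := (hbound r a ha).2
      _ ≤ s * B := Nat.mul_le_mul_right B hrs
      _ ≤ f b := (hbound s b hb).1
  have hltm : ∀ r, ∀ a ∈ V r, f a < m * B := fun r a ha =>
    (hbound r a ha).2.trans_le (Nat.mul_le_mul_right B r.isLt)
  refine ⟨B, f, fun a b hab => ?_, hfV, hlt⟩
  by_cases ha : ∃ r, a ∈ V r <;> by_cases hb : ∃ s, b ∈ V s
  · obtain ⟨⟨r, ha⟩, ⟨s, hb⟩⟩ := And.intro ha hb
    rcases lt_trichotomy r s with hrs | rfl | hrs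
    · exact absurd hab (hlt r s hrs a ha b hb).ne
    · rw [hfV r a ha, hfV r b hb] at hab
      exact hg r ha hb (Nat.add_left_cancel hab)
    · exact absurd hab (hlt s r hrs b hb a ha).ne'
  · obtain ⟨r, ha⟩ := ha
    exact absurd hab ((hltm r a ha).trans_le (hout b hb)).ne
  · obtain ⟨s, hb⟩ := hb
    exact absurd hab ((hltm s b hb).trans_le (hout a ha)).ne'
  · simpa [f, dif_neg ha, dif_neg hb] using hab

section IndepComplex

variable {G : SimpleGraph ℕ} {f : ℕ → ℕ}

theorem IsIndep.mono {F F' : Finset ℕ} (h : IsIndep G F) (hF' : F' ⊆ F) : IsIndep G F' :=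
  fun a ha b hb => h a (hF' ha) b (hF' hb)

theorem IsIndep.biUnion {m : ℕ} {V K : Fin m → Finset ℕ}
    (hV : Pairwise (Function.onFun Disjoint V)) (hedge : ∀ a b, G.Adj a b → ∃ r, a ∈ V r ∧ b ∈ V r)
    (hK : ∀ r, K r ⊆ V r ∧ IsIndep G (K r)) : IsIndep G (Finset.univ.biUnion K) := by
  have hblock : ∀ {r s : Fin m} {a : ℕ}, a ∈ K s → a ∈ V r → s = r := fun {r s a} haK haV => by
    by_contra hne
    exact Finset.disjoint_left.mp (hV hne) ((hK s).1 haK) haV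
  intro a ha b hb hab
  obtain ⟨r, har, hbr⟩ := hedge a b hab
  obtain ⟨s, -, has⟩ := Finset.mem_biUnion.mp ha
  obtain ⟨t, -, hbt⟩ := Finset.mem_biUnion.mp hb
  obtain rfl := hblock has har
  obtain rfl := hblock hbt hbr
  exact (hK _).2 a has b hbt hab

theorem image_indepComplex_downward_closed {W F : Finset ℕ}
    (hF : F ∈ Finset.image f '' indepComplex G W) {F' : Finset ℕ} (hF' : F' ⊆ F) :
    F' ∈ Finset.image f '' indepComplex G W := by
  obtain ⟨H, hH, rfl⟩ := hF
  obtain ⟨H', hH', rfl⟩ := Finset.subset_image_iff.mp hF'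
  exact ⟨H', ⟨hH'.trans hH.1, hH.2.mono hH'⟩, rfl⟩

theorem image_indepComplex_of_subset (hf : Function.Injective f) {U W : Finset ℕ}
    (hUW : U ⊆ W) :
    {F | F ∈ Finset.image f '' indepComplex G W ∧ F ⊆ U.image f} =
      Finset.image f '' indepComplex G U := by
  ext F
  constructor
  · rintro ⟨⟨H, hH, rfl⟩, hHU⟩
    exact ⟨H, ⟨(Finset.image_subset_image_iff hf).mp hHU, hH.2⟩, rfl⟩
  · rintro ⟨H, hH, rfl⟩
    exact ⟨⟨H, ⟨hH.1.trans hUW, hH.2⟩, rfl⟩, Finset.image_subset_image hH.1⟩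

theorem image_indepComplex_eq_image_image {W : Finset ℕ} {g ψ : ℕ → ℕ}
    (h : ∀ a ∈ W, f a = ψ (g a)) :
    Finset.image f '' indepComplex G W = Finset.image ψ '' (Finset.image g '' indepComplex G W) := by
  rw [Set.image_image]
  refine Set.image_congr fun H hH => ?_
  rw [Finset.image_image]
  exact Finset.image_congr fun a ha => h a (hH.1 ha)

theorem biUnion_mem_image_indepComplex {m : ℕ} {V X : Fin m → Finset ℕ}
    (hV : Pairwise (Function.onFun Disjoint V)) (hedge : ∀ a b, G.Adj a b → ∃ r, a ∈ V r ∧ b ∈ V r)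
    (hX : ∀ r, X r ∈ Finset.image f '' indepComplex G (V r)) :
    Finset.univ.biUnion X ∈ Finset.image f '' indepComplex G (Finset.univ.biUnion V) := by
  choose K hK hKX using hX
  refine ⟨Finset.univ.biUnion K, ⟨Finset.biUnion_mono fun r _ => (hK r).1,
    IsIndep.biUnion hV hedge hK⟩, ?_⟩
  simp only [Finset.biUnion_image, hKX]

end IndepComplex

theorem stmt_8_general (G : SimpleGraph ℕ) (m : ℕ) (V : Fin m → Finset ℕ)
    (hdisj : ∀ r s : Fin m, r ≠ s → Disjoint (V r) (V s))
    (hedge : ∀ a b, G.Adj a b → ∃ r, a ∈ V r ∧ b ∈ V r) :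
    Sortable (indepComplex G (Finset.univ.biUnion V)) ↔
      ∀ r, Sortable (indepComplex G (V r)) := by
  have hrestrict : ∀ {f : ℕ → ℕ}, Function.Injective f → ∀ r,
      {F | F ∈ Finset.image f '' indepComplex G (Finset.univ.biUnion V) ∧ F ⊆ (V r).image f} =
        Finset.image f '' indepComplex G (V r) := fun hf r =>
    image_indepComplex_of_subset hf (Finset.subset_biUnion_of_mem V (Finset.mem_univ r))
  simp only [sortable_iff]
  constructor
  · rintro ⟨f, hf, hΓ⟩ r
    exact ⟨f, hf, hrestrict hf r ▸ hΓ.restrict _⟩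
  · intro h
    choose g hg hgs using h
    obtain ⟨B, f, hf, hfV, hflt⟩ := exists_injective_blockwise hdisj fun r => (hg r).injOn
    refine ⟨f, hf, sortableWrt_of_blocks (I := fun r => (V r).image f) ?_ ?_
      (fun F hF _ => image_indepComplex_downward_closed hF) ?_ fun r => ?_⟩
    · rintro r s hrs _ hx _ hy
      obtain ⟨a, ha, rfl⟩ := Finset.mem_image.mp hx
      obtain ⟨b, hb, rfl⟩ := Finset.mem_image.mp hy
      exact hflt r s hrs a ha b hb
    · rintro _ ⟨H, hH, rfl⟩
      rw [← Finset.biUnion_image]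
      exact Finset.image_subset_image hH.1
    · intro X hX
      exact biUnion_mem_image_indepComplex hdisj hedge fun r => hrestrict hf r ▸ hX r
    · rw [hrestrict hf, image_indepComplex_eq_image_image (hfV r)]
      exact (hgs r).image (strictMono_id.const_add _)

/-- A finite simple graph `G` with vertex set `⋃ r, V r`, whose connected components
are the induced subgraphs on the blocks `V r`:  the blocks are pairwise disjoint,
every edge of `G` lies inside a block, and each block is pairwise reachable. -/
theorem stmt_8 (G : SimpleGraph ℕ) (m : ℕ) (V : Fin m → Finset ℕ)
    (hdisj : ∀ r s : Fin m, r ≠ s → Disjoint (V r) (V s))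
    (hedge : ∀ a b, G.Adj a b → ∃ r, a ∈ V r ∧ b ∈ V r)
    (hconn : ∀ r, ∀ a ∈ V r, ∀ b ∈ V r, G.Reachable a b) :
    Sortable (indepComplex G (Finset.univ.biUnion V)) ↔
      ∀ r, Sortable (indepComplex G (V r)) :=
  stmt_8_general G m V hdisj hedge
end

section
/- If a graph G contains a vertex i with three distinct neighbors j, l, m (i.e., G contains an induced star K_{1,3} or triangle-free claw centered at i), then for any labeling, sorting the pair of faces ({i}, {j,l,m}) of the independence complex produces a pair of 2-element sets, one of which contains i together with one of j, l, m, hence is not independent; so Δ(H) is not sortable, where H is the subgraph with edges {i,j}, {i,l}, {i,m}. -/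
open Finset

lemma sortFst_sortSnd_of_sort_eq {F G : Finset ℕ} {w x y z : ℕ}
    (h : (F.val + G.val).sort (· ≤ ·) = [w, x, y, z]) :
    sortFst F G = {w, y} ∧ sortSnd F G = {x, z} := by
  constructor <;> simp [sortFst, sortSnd, h, List.zipIdx, List.filter]

lemma exists_mem_sort_side_of_card_four {F G : Finset ℕ} (hFG : Disjoint F G)
    (hcard : #F + #G = 4) {a : ℕ} (ha : a ∈ F ∪ G) :
    #(sortFst F G) = 2 ∧ #(sortSnd F G) = 2 ∧
      ∃ b ∈ F ∪ G, b ≠ a ∧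
        ((a ∈ sortFst F G ∧ b ∈ sortFst F G) ∨
          (a ∈ sortSnd F G ∧ b ∈ sortSnd F G)) := by
  have hsort : (F.val + G.val).sort (· ≤ ·) = (F.disjUnion G hFG).sort (· ≤ ·) := rfl
  have hlen : ((F.disjUnion G hFG).sort (· ≤ ·)).length = 4 := by
    rw [Finset.length_sort, card_disjUnion, hcard]
  obtain ⟨w, x, y, z, hL⟩ := List.length_eq_four.mp hlen
  have hnodup := Finset.sort_nodup (F.disjUnion G hFG) (· ≤ ·)
  have hmem : ∀ t, t ∈ F ∪ G ↔ t ∈ [w, x, y, z] := fun t => by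
    rw [← hL, Finset.mem_sort, mem_disjUnion, mem_union]
  obtain ⟨hFst, hSnd⟩ := sortFst_sortSnd_of_sort_eq (hsort.trans hL)
  rw [hL] at hnodup
  simp only [List.nodup_cons, List.mem_cons, List.not_mem_nil, or_false, not_or,
    List.nodup_nil, and_true] at hnodup
  obtain ⟨⟨-, hwy, -⟩, ⟨-, hxz⟩, -⟩ := hnodup
  rw [hFst, hSnd, card_pair hwy, card_pair hxz]
  refine ⟨rfl, rfl, ?_⟩
  simp only [hmem, List.mem_cons, List.not_mem_nil, or_false] at ha ⊢
  rcases ha with rfl | rfl | rfl | rfl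
  exacts [⟨y, by simp, Ne.symm hwy, by simp⟩, ⟨z, by simp, Ne.symm hxz, by simp⟩,
    ⟨w, by simp, hwy, by simp⟩, ⟨x, by simp, hxz, by simp⟩]

lemma exists_mem_sort_side_image_singleton {f : ℕ → ℕ} (hf : Function.Injective f)
    {c : ℕ} {s : Finset ℕ} (hc : c ∉ s) (hs : #s = 3) :
    #(sortFst (({c} : Finset ℕ).image f) (s.image f)) = 2 ∧
      #(sortSnd (({c} : Finset ℕ).image f) (s.image f)) = 2 ∧
      ∃ x ∈ s,
        (f c ∈ sortFst (({c} : Finset ℕ).image f) (s.image f) ∧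
            f x ∈ sortFst (({c} : Finset ℕ).image f) (s.image f)) ∨
          (f c ∈ sortSnd (({c} : Finset ℕ).image f) (s.image f) ∧
            f x ∈ sortSnd (({c} : Finset ℕ).image f) (s.image f)) := by
  have hdisj : Disjoint (({c} : Finset ℕ).image f) (s.image f) := by
    rw [image_singleton, disjoint_singleton_left, hf.mem_finset_image]
    exact hc
  have hcard : #(({c} : Finset ℕ).image f) + #(s.image f) = 4 := by
    rw [card_image_of_injective _ hf, card_image_of_injective _ hf, card_singleton, hs]
  obtain ⟨h1, h2, b, hb, hbc, hpair⟩ :=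
    exists_mem_sort_side_of_card_four hdisj hcard (a := f c) (by simp)
  rw [mem_union, image_singleton, mem_singleton] at hb
  obtain ⟨x, hx, rfl⟩ := mem_image.mp (hb.resolve_left hbc)
  exact ⟨h1, h2, x, hx, hpair⟩

lemma isIndep_singleton (H : SimpleGraph ℕ) (a : ℕ) : IsIndep H {a} := by
  simp [IsIndep]

lemma IsIndep.not_adj_of_mem_image {H : SimpleGraph ℕ} {A : Finset ℕ} (hA : IsIndep H A)
    {f : ℕ → ℕ} (hf : Function.Injective f) {a b : ℕ} (ha : f a ∈ A.image f)
    (hb : f b ∈ A.image f) : ¬ H.Adj a b :=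
  hA a (hf.mem_finset_image.mp ha) b (hf.mem_finset_image.mp hb)

lemma not_sortableWrt_of_adj_mem_sort_side {H : SimpleGraph ℕ} {V A B : Finset ℕ}
    {f : ℕ → ℕ} (hf : Function.Injective f) (hAV : A ⊆ V) (hA : IsIndep H A)
    (hBV : B ⊆ V) (hB : IsIndep H B) {a b : ℕ} (hab : H.Adj a b)
    (hside :
      (f a ∈ sortFst (A.image f) (B.image f) ∧ f b ∈ sortFst (A.image f) (B.image f)) ∨
        (f a ∈ sortSnd (A.image f) (B.image f) ∧ f b ∈ sortSnd (A.image f) (B.image f))) :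
    ¬ SortableWrt {F | ∃ C : Finset ℕ, C ⊆ V ∧ IsIndep H C ∧ F = C.image f} := by
  intro hsort
  obtain ⟨⟨C, -, hC, hCFst⟩, ⟨D, -, hD, hDSnd⟩⟩ :=
    hsort _ ⟨A, hAV, hA, rfl⟩ _ ⟨B, hBV, hB, rfl⟩
  rcases hside with ⟨ha, hb⟩ | ⟨ha, hb⟩
  · rw [hCFst] at ha hb
    exact hC.not_adj_of_mem_image hf ha hb hab
  · rw [hDSnd] at ha hb
    exact hD.not_adj_of_mem_image hf ha hb hab

theorem stmt_16 (H : SimpleGraph ℕ) (i j l m : ℕ)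
    (hdist : ({i, j, l, m} : Finset ℕ).card = 4)
    -- H is the star with center i and leaves j, l, m
    (hH : ∀ a b, H.Adj a b ↔
      ((a = i ∧ (b = j ∨ b = l ∨ b = m)) ∨ (b = i ∧ (a = j ∨ a = l ∨ a = m)))) :
    (∀ f : ℕ → ℕ, Function.Injective f →
      -- sorting the relabeled pair ({i}, {j,l,m}) gives two 2-element sets ...
      (sortFst (({i} : Finset ℕ).image f) (({j, l, m} : Finset ℕ).image f)).card = 2 ∧
      (sortSnd (({i} : Finset ℕ).image f) (({j, l, m} : Finset ℕ).image f)).card = 2 ∧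
      -- ... one of which contains (the label of) i together with one of j, l, m
      (∃ x, (x = j ∨ x = l ∨ x = m) ∧
        ((f i ∈ sortFst (({i} : Finset ℕ).image f) (({j, l, m} : Finset ℕ).image f) ∧
          f x ∈ sortFst (({i} : Finset ℕ).image f) (({j, l, m} : Finset ℕ).image f)) ∨
         (f i ∈ sortSnd (({i} : Finset ℕ).image f) (({j, l, m} : Finset ℕ).image f) ∧
          f x ∈ sortSnd (({i} : Finset ℕ).image f) (({j, l, m} : Finset ℕ).image f))))) ∧
    -- hence the independence complex of H is not sortable, for any labeling
    (∀ f : ℕ → ℕ, Function.Injective f →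
      ¬ SortableWrt {F | ∃ A : Finset ℕ, A ⊆ {i, j, l, m} ∧ IsIndep H A ∧ F = A.image f}) := by
  have hi : i ∉ ({j, l, m} : Finset ℕ) := fun h => by
    have := card_le_three (a := j) (b := l) (c := m)
    rw [card_insert_of_mem h] at hdist
    omega
  have hcard : #({j, l, m} : Finset ℕ) = 3 := by
    rw [card_insert_of_notMem hi] at hdist
    omega
  have hleaves : IsIndep H {j, l, m} := by
    intro a ha b hb hab
    rcases (hH a b).mp hab with ⟨rfl, -⟩ | ⟨rfl, -⟩
    exacts [hi ha, hi hb]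
  have hside := fun f (hf : Function.Injective f) =>
    exists_mem_sort_side_image_singleton hf hi hcard
  refine ⟨fun f hf => ?_, fun f hf => ?_⟩
  · obtain ⟨h1, h2, x, hx, hpair⟩ := hside f hf
    exact ⟨h1, h2, x, by simpa using hx, hpair⟩
  · obtain ⟨-, -, x, hx, hpair⟩ := hside f hf
    have hix : H.Adj i x := (hH i x).mpr (Or.inl ⟨rfl, by simpa using hx⟩)
    exact not_sortableWrt_of_adj_mem_sort_side hf (by simp) (isIndep_singleton H i)
      (subset_insert _ _) hleaves hix hpair
end
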